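/- Let G = (V,E) be a graph whose vertex set admits a partition into two non-empty sets V1 and V2 such that every vertex of V1 is adjacent to every vertex of V2. Then G is critical if and only if both induced subgraphs G[V1] and G[V2] are critical. -/

import Mathlib

open SimpleGraph

/-- A graph is `k`-critical if its chromatic number equals `k` and every proper
induced subgraph is `(k-1)`-colorable. -/
def IsKCritical {V : Type*} (G : SimpleGraph V) (k : ℕ) : Prop :=
  G.chromaticNumber = k ∧ ∀ s : Set V, s ≠ Set.univ → (G.induce s).Colorable (k - 1)

/-- A set `X` of vertices is a module if every vertex outside `X` is adjacent
either to all vertices of `X` or to none of them. -/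
def IsModule {V : Type*} (G : SimpleGraph V) (X : Set V) : Prop :=
  ∀ v ∉ X, (∀ x ∈ X, G.Adj v x) ∨ (∀ x ∈ X, ¬ G.Adj v x)

/-- `G` contains no induced subgraph isomorphic to `H`. -/
def InducedFree {V W : Type*} (G : SimpleGraph V) (H : SimpleGraph W) : Prop :=
  ¬ ∃ s : Set V, Nonempty ((G.induce s) ≃g H)

/-- `G` is (P5, P5-bar)-free. -/
def P5P5barFree {V : Type*} (G : SimpleGraph V) : Prop :=
  InducedFree G (pathGraph 5) ∧ InducedFree G (pathGraph 5)ᶜ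

/-- A buoy in `G` given by its five non-empty bags. -/
structure IsBuoy {V : Type*} (G : SimpleGraph V) (B : Fin 5 → Set V) : Prop where
  nonempty : ∀ i, (B i).Nonempty
  disjoint : ∀ i j, i ≠ j → Disjoint (B i) (B j)
  adj_next : ∀ i, ∀ x ∈ B i, ∀ y ∈ B (i + 1), G.Adj x y
  not_adj_skip : ∀ i, ∀ x ∈ B i, ∀ y ∈ B (i + 2), ¬ G.Adj x y

/-- `G` is a pseudo-buoy with (possibly empty) bags `B 0, …, B 4` partitioning
its vertex set. -/
structure IsPseudoBuoy {V : Type*} (G : SimpleGraph V) (B : Fin 5 → Set V) : Prop where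
  cover : (⋃ i, B i) = Set.univ
  disjoint : ∀ i j, i ≠ j → Disjoint (B i) (B j)
  adj_next : ∀ i, ∀ x ∈ B i, ∀ y ∈ B (i + 1), G.Adj x y
  not_adj_skip : ∀ i, ∀ x ∈ B i, ∀ y ∈ B (i + 2), ¬ G.Adj x y

/-- The graph obtained from `G` by substituting `H` for the module `M`. -/
def substitute {V W : Type*} (G : SimpleGraph V) (M : Set V) (H : SimpleGraph W) :
    SimpleGraph ({v : V // v ∉ M} ⊕ W) where
  Adj x y :=
    match x, y with
    | Sum.inl a, Sum.inl b => G.Adj a b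
    | Sum.inl a, Sum.inr _ => ∃ m ∈ M, G.Adj a m
    | Sum.inr _, Sum.inl b => ∃ m ∈ M, G.Adj b m
    | Sum.inr a, Sum.inr b => H.Adj a b
  symm := by
    refine ⟨?_⟩
    rintro (a | a) (b | b) h
    · exact G.adj_symm h
    · exact h
    · exact h
    · exact H.adj_symm h
  loopless := by
    refine ⟨?_⟩
    rintro (a | a) h
    · exact G.irrefl h
    · exact H.irrefl h

/-- The join of two graphs. -/
def joinGraph {V W : Type*} (G : SimpleGraph V) (H : SimpleGraph W) :
    SimpleGraph (V ⊕ W) where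
  Adj x y :=
    match x, y with
    | Sum.inl a, Sum.inl b => G.Adj a b
    | Sum.inl _, Sum.inr _ => True
    | Sum.inr _, Sum.inl _ => True
    | Sum.inr a, Sum.inr b => H.Adj a b
  symm := by
    refine ⟨?_⟩
    rintro (a | a) (b | b) h
    · exact G.adj_symm h
    · trivial
    · trivial
    · exact H.adj_symm h
  loopless := by
    refine ⟨?_⟩
    rintro (a | a) h
    · exact G.irrefl h
    · exact H.irrefl h

/-!
Over a complete join the chromatic number is additive, `χ(G[A ∪ B]) = χ(G[A]) + χ(G[B])`,
because the two sides of the join must use disjoint sets of colours. For finite graphs,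
criticality of `G[A]` says that every proper subset of `A` induces a graph of smaller chromatic
number. A proper subset `t` of `A` yields the proper subset `t ∪ B` of `A ∪ B`, and a proper
subset of `A ∪ B` meets `A` or `B` in a proper subset, so additivity transfers the strict drop
of the chromatic number in both directions.
-/
namespace SimpleGraph

variable {V : Type*} {G : SimpleGraph V}

open Finset in
theorem Coloring.chromaticNumber_le_card {α : Type*} (C : G.Coloring α) (s : Finset α)
    (h : ∀ v, C v ∈ s) : G.chromaticNumber ≤ #s := by
  simpa using (Coloring.mk (fun v ↦ (⟨C v, h v⟩ : s))
    fun hvw heq ↦ C.valid hvw (congrArg Subtype.val heq)).colorable.chromaticNumber_le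

theorem chromaticNumber_ne_top [Finite V] (G : SimpleGraph V) : G.chromaticNumber ≠ ⊤ :=
  chromaticNumber_ne_top_iff_exists.mpr ⟨_, G.colorable_chromaticNumber_of_fintype⟩

theorem chromaticNumber_induce_mono {s t : Set V} (h : s ⊆ t) :
    (G.induce s).chromaticNumber ≤ (G.induce t).chromaticNumber :=
  chromaticNumber_mono_of_hom (G.induceHomOfLE h).toHom

theorem chromaticNumber_induce_univ : (G.induce Set.univ).chromaticNumber = G.chromaticNumber :=
  chromaticNumber_congr G.induceUnivIso

theorem chromaticNumber_induce_induce (A : Set V) (t : Set A) :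
    ((G.induce A).induce t).chromaticNumber = (G.induce (Subtype.val '' t)).chromaticNumber :=
  chromaticNumber_congr
    { toEquiv := Equiv.Set.image Subtype.val t Subtype.val_injective
      map_rel_iff' := by simp }

theorem Colorable.induce_union {A B : Set V} {a b : ℕ} (hA : (G.induce A).Colorable a)
    (hB : (G.induce B).Colorable b) : (G.induce (A ∪ B)).Colorable (a + b) := by
  classical
  obtain ⟨cA⟩ := hA
  obtain ⟨cB⟩ := hB
  let c : (G.induce (A ∪ B)).Coloring (Fin a ⊕ Fin b) :=
    Coloring.mk
      (fun v ↦ if h : v.1 ∈ A then .inl (cA ⟨v, h⟩) else .inr (cB ⟨v, v.2.resolve_left h⟩))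
      fun {u v} huv ↦ by
        split_ifs <;> simp only [ne_eq, reduceCtorEq, Sum.inl.injEq, Sum.inr.injEq,
          not_false_eq_true]
        exacts [cA.valid huv, cB.valid huv]
  simpa using c.colorable

theorem chromaticNumber_induce_union_le (A B : Set V) :
    (G.induce (A ∪ B)).chromaticNumber ≤
      (G.induce A).chromaticNumber + (G.induce B).chromaticNumber := by
  obtain hA | hA := eq_or_ne (G.induce A).chromaticNumber ⊤
  · simp [hA]
  obtain hB | hB := eq_or_ne (G.induce B).chromaticNumber ⊤
  · simp [hB]
  rw [← ENat.natCast_toNat hA, ← ENat.natCast_toNat hB, ← Nat.cast_add]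
  exact ((colorable_of_chromaticNumber_ne_top hA).induce_union
    (colorable_of_chromaticNumber_ne_top hB)).chromaticNumber_le

open Finset in
theorem IsCompleteBetween.chromaticNumber_add_le {A B : Set V} (h : G.IsCompleteBetween A B) :
    (G.induce A).chromaticNumber + (G.induce B).chromaticNumber ≤
      (G.induce (A ∪ B)).chromaticNumber := by
  classical
  rw [chromaticNumber_eq_biInf]
  refine le_iInf₂ fun m ⟨c⟩ ↦ ?_
  let cA : (G.induce A).Coloring (Fin m) := c.comp (G.induceHomOfLE Set.subset_union_left).toHom
  let cB : (G.induce B).Coloring (Fin m) := c.comp (G.induceHomOfLE Set.subset_union_right).toHom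
  have hdisj : Disjoint (Set.range cA).toFinset (Set.range cB).toFinset := by
    rw [Set.disjoint_toFinset, Set.disjoint_left]
    rintro _ ⟨x, rfl⟩ ⟨y, hxy⟩
    exact c.valid (v := ⟨x, .inl x.2⟩) (w := ⟨y, .inr y.2⟩) (h x.2 y.2) hxy.symm
  calc (G.induce A).chromaticNumber + (G.induce B).chromaticNumber
      ≤ #(Set.range cA).toFinset + #(Set.range cB).toFinset :=
        add_le_add (cA.chromaticNumber_le_card _ (by simp)) (cB.chromaticNumber_le_card _ (by simp))
    _ ≤ m := by
      rw [← Nat.cast_add, ← card_union_of_disjoint hdisj, Nat.cast_le]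
      simpa using card_le_univ (Set.range cA ∪ Set.range cB).toFinset

theorem IsCompleteBetween.chromaticNumber_induce_union {A B : Set V}
    (h : G.IsCompleteBetween A B) :
    (G.induce (A ∪ B)).chromaticNumber =
      (G.induce A).chromaticNumber + (G.induce B).chromaticNumber :=
  (chromaticNumber_induce_union_le A B).antisymm h.chromaticNumber_add_le

theorem IsCompleteBetween.mono {A B A' B' : Set V} (h : G.IsCompleteBetween A B) (hA : A' ⊆ A)
    (hB : B' ⊆ B) : G.IsCompleteBetween A' B' :=
  fun _ hx _ hy ↦ h (hA hx) (hB hy)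

theorem isKCritical_iff_chromaticNumber_induce_lt {k : ℕ} :
    IsKCritical G k ↔ G.chromaticNumber = k ∧
      ∀ s : Set V, s ≠ Set.univ → (G.induce s).chromaticNumber < k := by
  refine and_congr_right fun hk ↦ forall₂_congr fun s hs ↦ ?_
  obtain ⟨v, -⟩ := (Set.ne_univ_iff_exists_notMem s).mp hs
  -- `k - 1` is truncated, but `k = 0` would make `V` empty
  obtain ⟨j, rfl⟩ : ∃ j, k = j + 1 := Nat.exists_eq_add_one.mpr <| Nat.pos_of_ne_zero <| by
    rintro rfl
    exact (chromaticNumber_eq_zero_iff.mp hk).false v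
  rw [← chromaticNumber_le_iff_colorable, Nat.add_sub_cancel, Nat.cast_succ,
    ENat.lt_add_one_iff (ENat.natCast_ne_top j)]

theorem exists_isKCritical_iff [Finite V] :
    (∃ k, IsKCritical G k) ↔
      ∀ s : Set V, s ≠ Set.univ → (G.induce s).chromaticNumber < G.chromaticNumber := by
  simp_rw [isKCritical_iff_chromaticNumber_induce_lt]
  refine ⟨fun ⟨k, hk, hs⟩ ↦ hk ▸ hs, fun hs ↦ ⟨G.chromaticNumber.toNat, ?_⟩⟩
  rw [ENat.natCast_toNat G.chromaticNumber_ne_top]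
  exact ⟨rfl, hs⟩

def IsCriticalSet (G : SimpleGraph V) (A : Set V) : Prop :=
  ∀ s ⊂ A, (G.induce s).chromaticNumber < (G.induce A).chromaticNumber

theorem exists_isKCritical_iff_isCriticalSet_univ [Finite V] :
    (∃ k, IsKCritical G k) ↔ G.IsCriticalSet Set.univ := by
  simp only [exists_isKCritical_iff, IsCriticalSet, Set.ssubset_univ_iff,
    chromaticNumber_induce_univ]

theorem exists_isKCritical_induce_iff [Finite V] {A : Set V} :
    (∃ k, IsKCritical (G.induce A) k) ↔ G.IsCriticalSet A := by
  simp_rw [exists_isKCritical_iff, chromaticNumber_induce_induce]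
  refine ⟨fun h s hs ↦ ?_, fun h t ht ↦ h _ ?_⟩
  · obtain ⟨x, hxA, hxs⟩ := Set.exists_of_ssubset hs
    have := h (Subtype.val ⁻¹' s) ((Set.ne_univ_iff_exists_notMem _).mpr ⟨⟨x, hxA⟩, hxs⟩)
    rwa [Subtype.image_preimage_coe, Set.inter_eq_self_of_subset_right hs.subset] at this
  · obtain ⟨x, hxt⟩ := (Set.ne_univ_iff_exists_notMem t).mp ht
    refine (Set.ssubset_iff_of_subset (Subtype.coe_image_subset A t)).mpr ⟨x, x.2, ?_⟩
    rwa [Subtype.val_injective.mem_set_image]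

namespace IsCompleteBetween

variable [Finite V] {A B : Set V}

theorem isCriticalSet_left (h : G.IsCompleteBetween A B) (hAB : G.IsCriticalSet (A ∪ B)) :
    G.IsCriticalSet A := by
  intro t ht
  obtain ⟨x, hxA, hxt⟩ := Set.exists_of_ssubset ht
  have htB : t ∪ B ⊂ A ∪ B :=
    (Set.ssubset_iff_of_subset (Set.union_subset_union_left B ht.subset)).mpr
      ⟨x, .inl hxA, fun hx ↦ hx.elim hxt (Set.disjoint_left.mp h.disjoint hxA)⟩
  have := hAB _ htB
  rw [(h.mono ht.subset subset_rfl).chromaticNumber_induce_union,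
    h.chromaticNumber_induce_union] at this
  exact (ENat.add_lt_add_iff_right (chromaticNumber_ne_top _)).mp this

theorem chromaticNumber_lt_of_not_subset (h : G.IsCompleteBetween A B) (hA : G.IsCriticalSet A)
    {s : Set V} (hs : s ⊆ A ∪ B) (hAs : ¬ A ⊆ s) :
    (G.induce s).chromaticNumber < (G.induce (A ∪ B)).chromaticNumber := by
  have hsplit : s = s ∩ A ∪ s ∩ B := by
    rw [← Set.inter_union_distrib_left, Set.inter_eq_left.mpr hs]
  rw [hsplit, (h.mono Set.inter_subset_right Set.inter_subset_right).chromaticNumber_induce_union,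
    h.chromaticNumber_induce_union]
  have hsA : s ∩ A ⊂ A :=
    Set.inter_subset_right.ssubset_of_not_subset fun hA' ↦ hAs (hA'.trans Set.inter_subset_left)
  exact ENat.add_lt_add_of_lt_of_le (chromaticNumber_ne_top _) (hA _ hsA)
    (chromaticNumber_induce_mono Set.inter_subset_right)

theorem isCriticalSet_union_iff (h : G.IsCompleteBetween A B) :
    G.IsCriticalSet (A ∪ B) ↔ G.IsCriticalSet A ∧ G.IsCriticalSet B := by
  refine ⟨fun hAB ↦ ⟨h.isCriticalSet_left hAB,
    h.symm.isCriticalSet_left (Set.union_comm A B ▸ hAB)⟩, fun ⟨hA, hB⟩ s hs ↦ ?_⟩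
  by_cases hAs : A ⊆ s
  · rw [Set.union_comm] at hs ⊢
    exact h.symm.chromaticNumber_lt_of_not_subset hB hs.subset fun hBs ↦
      hs.not_subset (Set.union_subset hBs hAs)
  · exact h.chromaticNumber_lt_of_not_subset hA hs.subset hAs

end IsCompleteBetween

end SimpleGraph

theorem join_critical_iff_general {V : Type*} [Fintype V]
    (G : SimpleGraph V) (V1 V2 : Set V)
    (hcover : V1 ∪ V2 = Set.univ)
    (hjoin : ∀ x ∈ V1, ∀ y ∈ V2, G.Adj x y) :
    (∃ k : ℕ, IsKCritical G k) ↔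
      ((∃ k1 : ℕ, IsKCritical (G.induce V1) k1) ∧
       (∃ k2 : ℕ, IsKCritical (G.induce V2) k2)) := by
  rw [exists_isKCritical_iff_isCriticalSet_univ, ← hcover, exists_isKCritical_induce_iff,
    exists_isKCritical_induce_iff]
  exact IsCompleteBetween.isCriticalSet_union_iff fun x hx y hy ↦ hjoin x hx y hy

/-- A graph which is the join of two non-empty parts is critical iff both
parts induce critical graphs. -/
theorem join_critical_iff {V : Type*} [Fintype V]
    (G : SimpleGraph V) (V1 V2 : Set V)
    (h1 : V1.Nonempty) (h2 : V2.Nonempty)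
    (hdisj : Disjoint V1 V2) (hcover : V1 ∪ V2 = Set.univ)
    (hjoin : ∀ x ∈ V1, ∀ y ∈ V2, G.Adj x y) :
    (∃ k : ℕ, IsKCritical G k) ↔
      ((∃ k1 : ℕ, IsKCritical (G.induce V1) k1) ∧
       (∃ k2 : ℕ, IsKCritical (G.induce V2) k2)) :=
  join_critical_iff_general G V1 V2 hcover hjoin
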